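/- arXiv:1410.7330 — 5 statements merged into one kernel-verified Lean document; each statement's English description precedes it below -/
import Mathlib

section
/- For every natural number k ≥ 1, Aᵏ (x* + ε v) = x* + ε (1/3)ᵏ v, where A is the matrix [[1/6,1/4,0,1/12],[1/2,5/12,1/3,1/4],[1/4,1/3,5/12,1/2],[1/12,0,1/4,1/6]], x* = (1/8,3/8,3/8,1/8)ᵀ, v = (1,1,-1,-1)ᵀ, and ε is any real number. In particular Aᵏ(x* + εv) converges to x* as k → ∞. -/
open Filter

theorem stmt_3 (ε : ℝ) :
    let A : Matrix (Fin 4) (Fin 4) ℝ :=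
      !![1/6, 1/4, 0, 1/12;
         1/2, 5/12, 1/3, 1/4;
         1/4, 1/3, 5/12, 1/2;
         1/12, 0, 1/4, 1/6]
    let x : Fin 4 → ℝ := ![1/8, 3/8, 3/8, 1/8]
    let v : Fin 4 → ℝ := ![1, 1, -1, -1]
    (∀ k : ℕ, 1 ≤ k →
        (A ^ k).mulVec (x + ε • v) = x + (ε * (1/3 : ℝ) ^ k) • v) ∧
    Tendsto (fun k : ℕ => (A ^ k).mulVec (x + ε • v)) atTop (nhds x) := by
  intro A x v
  have step : ∀ c : ℝ, A.mulVec (x + c • v) = x + (c * (1/3)) • v := by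
    intro c
    funext i
    fin_cases i <;>
      simp [A, x, v, Matrix.mulVec, dotProduct, Fin.sum_univ_four] <;> ring
  have key : ∀ k : ℕ, (A ^ k).mulVec (x + ε • v) = x + (ε * (1/3 : ℝ) ^ k) • v := by
    intro k
    induction k with
    | zero => simp
    | succ n ih =>
        rw [pow_succ', ← Matrix.mulVec_mulVec, ih, step]
        ring_nf
  refine ⟨fun k _ => key k, ?_⟩
  have h1 : Tendsto (fun k : ℕ => x + (ε * (1/3 : ℝ) ^ k) • v) atTop (nhds x) := by
    have : Tendsto (fun k : ℕ => (ε * (1/3 : ℝ) ^ k)) atTop (nhds 0) := by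
      simpa using (tendsto_pow_atTop_nhds_zero_of_lt_one (by norm_num) (by norm_num : (1/3:ℝ) < 1)).const_mul ε
    have := this.smul_const v
    simpa using tendsto_const_nhds.add this
  simpa [key] using h1
end

section
/- Let m₁, m₂ be positive reals with 2m₁ + m₂ > 0, and define sequences y_t(1), y_t(2) by y_{t+1}(1) = m₂ y_t(2)/(2m₁+m₂) and y_{t+1}(2) = (m₁ y_t(1) + m₂ y_t(2))/(2m₁+m₂), with y₀(1), y₀(2) > 0. If m₂ < 2m₁, then for all t: y_t(1) > 0, y_t(2) > 0, both sequences are bounded above by max{y₀(1), y₀(2)}, and both tend to 0 as t → ∞. -/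
open Filter

theorem stmt_4 (m₁ m₂ : ℝ) (hm₁ : 0 < m₁) (hm₂ : 0 < m₂)
    (hs : 0 < 2 * m₁ + m₂) (h2 : m₂ < 2 * m₁)
    (y₁ y₂ : ℕ → ℝ) (h01 : 0 < y₁ 0) (h02 : 0 < y₂ 0)
    (hrec1 : ∀ t, y₁ (t + 1) = m₂ * y₂ t / (2 * m₁ + m₂))
    (hrec2 : ∀ t, y₂ (t + 1) = (m₁ * y₁ t + m₂ * y₂ t) / (2 * m₁ + m₂)) :
    (∀ t, 0 < y₁ t ∧ 0 < y₂ t ∧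
      y₁ t ≤ max (y₁ 0) (y₂ 0) ∧ y₂ t ≤ max (y₁ 0) (y₂ 0)) ∧
    Tendsto y₁ atTop (nhds 0) ∧ Tendsto y₂ atTop (nhds 0) := by
  set r : ℝ := (m₁ + m₂) / (2 * m₁ + m₂) with hr
  set M : ℝ := max (y₁ 0) (y₂ 0) with hM
  have hM0 : 0 < M := lt_of_lt_of_le h01 (le_max_left _ _)
  have hr0 : 0 ≤ r := div_nonneg (by linarith) hs.le
  have hr1 : r < 1 := by
    rw [hr, div_lt_one hs]; linarith
  have key : ∀ t, 0 < y₁ t ∧ 0 < y₂ t ∧ y₁ t ≤ r ^ t * M ∧ y₂ t ≤ r ^ t * M := by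
    intro t
    induction t with
    | zero =>
      simpa using ⟨h01, h02, le_max_left _ _, le_max_right _ _⟩
    | succ n ih =>
      obtain ⟨p1, p2, b1, b2⟩ := ih
      have hrnM : 0 ≤ r ^ n * M := mul_nonneg (pow_nonneg hr0 n) hM0.le
      refine ⟨?_, ?_, ?_, ?_⟩
      · rw [hrec1]; positivity
      · rw [hrec2]; positivity
      · rw [hrec1, pow_succ, div_le_iff₀ hs]
        have e : r ^ n * r * M * (2 * m₁ + m₂) = (m₁ + m₂) * (r ^ n * M) := by
          rw [hr]; field_simp
        rw [e]; nlinarith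
      · rw [hrec2, pow_succ, div_le_iff₀ hs]
        have e : r ^ n * r * M * (2 * m₁ + m₂) = (m₁ + m₂) * (r ^ n * M) := by
          rw [hr]; field_simp
        rw [e]; nlinarith
  have hpow : Tendsto (fun t : ℕ => r ^ t * M) atTop (nhds 0) := by
    have := (tendsto_pow_atTop_nhds_zero_of_lt_one hr0 hr1).mul_const M
    simpa using this
  have hrn1 : ∀ t : ℕ, r ^ t ≤ 1 := fun t => pow_le_one₀ hr0 hr1.le
  refine ⟨fun t => ⟨(key t).1, (key t).2.1, ?_, ?_⟩, ?_, ?_⟩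
  · exact le_trans (key t).2.2.1 (by nlinarith [hrn1 t, pow_nonneg hr0 t])
  · exact le_trans (key t).2.2.2 (by nlinarith [hrn1 t, pow_nonneg hr0 t])
  · exact squeeze_zero (fun t => (key t).1.le) (fun t => (key t).2.2.1) hpow
  · exact squeeze_zero (fun t => (key t).2.1.le) (fun t => (key t).2.2.2) hpow
end

section
/- Let m₁, m₂ be positive reals. The open interval (2(m₁² + m₂² + m₁m₂)/(m₂(2m₁ + m₂)), m₂/m₁) is nonempty if and only if ξ³ − 2ξ − 2 > 0, where ξ = m₂/m₁. In particular, it is nonempty whenever ξ₀ < m₂/m₁, where ξ₀ is the unique real root of ξ³ − 2ξ − 2 = 0. -/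
lemma cubic_pos_of_gt_root (ξ₀ a : ℝ) (hroot : ξ₀ ^ 3 - 2 * ξ₀ - 2 = 0)
    (huniq : ∀ x : ℝ, x ^ 3 - 2 * x - 2 = 0 → x = ξ₀) (ha : ξ₀ < a) :
    a ^ 3 - 2 * a - 2 > 0 := by
  by_contra h
  push_neg at h
  set f : ℝ → ℝ := fun x => x ^ 3 - 2 * x - 2 with hf
  have hcont : ContinuousOn f (Set.Icc a (max a 2)) := by
    apply Continuous.continuousOn; fun_prop
  have hab : a ≤ max a 2 := le_max_left a 2
  have hfb : 0 ≤ f (max a 2) := by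
    have h2 : (2:ℝ) ≤ max a 2 := le_max_right a 2
    simp only [hf]; nlinarith [sq_nonneg (a ⊔ 2), h2]
  obtain ⟨c, hc, hfc⟩ := intermediate_value_Icc hab hcont ⟨h, hfb⟩
  have hceq : c = ξ₀ := huniq c hfc
  have : ξ₀ < c := lt_of_lt_of_le ha hc.1
  linarith

theorem stmt_6 (m₁ m₂ : ℝ) (hm₁ : 0 < m₁) (hm₂ : 0 < m₂) :
    ((2 * (m₁ ^ 2 + m₂ ^ 2 + m₁ * m₂) / (m₂ * (2 * m₁ + m₂)) < m₂ / m₁) ↔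
      (m₂ / m₁) ^ 3 - 2 * (m₂ / m₁) - 2 > 0) ∧
    (∀ ξ₀ : ℝ, (ξ₀ ^ 3 - 2 * ξ₀ - 2 = 0) →
      (∀ x : ℝ, x ^ 3 - 2 * x - 2 = 0 → x = ξ₀) →
      ξ₀ < m₂ / m₁ →
      2 * (m₁ ^ 2 + m₂ ^ 2 + m₁ * m₂) / (m₂ * (2 * m₁ + m₂)) < m₂ / m₁) := by
  have hden : 0 < m₂ * (2 * m₁ + m₂) := by positivity
  have key : (2 * (m₁ ^ 2 + m₂ ^ 2 + m₁ * m₂) / (m₂ * (2 * m₁ + m₂)) < m₂ / m₁) ↔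
      (m₂ / m₁) ^ 3 - 2 * (m₂ / m₁) - 2 > 0 := by
    have heq : (m₂ / m₁) ^ 3 - 2 * (m₂ / m₁) - 2
        = (m₂ ^ 3 - 2 * m₁ ^ 2 * m₂ - 2 * m₁ ^ 3) / m₁ ^ 3 := by
      field_simp
    rw [div_lt_div_iff₀ hden hm₁, gt_iff_lt, heq,
      lt_div_iff₀ (by positivity : (0:ℝ) < m₁ ^ 3)]
    constructor <;> intro h <;> nlinarith
  refine ⟨key, fun ξ₀ hroot huniq hlt => ?_⟩
  exact key.mpr (cubic_pos_of_gt_root ξ₀ _ hroot huniq hlt)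
end

section
/- Let E : (ℝⁿ)^ℕ → ℝ≥0 be given with E(x_t) ≤ n² for all t, and suppose E(x_{t+1}) ≤ E(x_t) − 4 D_t where D_t ≥ 0 for all t. If S ⊆ ℕ is a set of times such that D_t + D_{t+1} ≥ 1/(9n²) for every t ∈ S, and any two elements of S differ by at least 2, then |S| ≤ 18 n⁴. -/
theorem stmt_14 (n : ℕ) (hn : 0 < n) (E D : ℕ → ℝ)
    (hE0 : ∀ t, 0 ≤ E t) (hEb : ∀ t, E t ≤ (n : ℝ) ^ 2)
    (hD : ∀ t, 0 ≤ D t)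
    (hdec : ∀ t, E (t + 1) ≤ E t - 4 * D t)
    (S : Finset ℕ)
    (hS : ∀ t ∈ S, 1 / (9 * (n : ℝ) ^ 2) ≤ D t + D (t + 1))
    (hsep : ∀ s ∈ S, ∀ t ∈ S, s < t → s + 2 ≤ t) :
    (S.card : ℝ) ≤ 18 * (n : ℝ) ^ 4 := by
  have hn' : (0:ℝ) < (n:ℝ) ^ 2 := by positivity
  -- partial sums of D are bounded
  have hsum : ∀ N, 4 * ∑ t ∈ Finset.range N, D t ≤ E 0 - E N := by
    intro N
    induction N with
    | zero => simp
    | succ N ih =>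
      rw [Finset.sum_range_succ]
      have := hdec N
      linarith
  have hsumb : ∀ N, ∑ t ∈ Finset.range N, D t ≤ (n:ℝ)^2 / 4 := by
    intro N
    have h1 := hsum N
    have h2 := hEb 0
    have h3 := hE0 N
    linarith
  -- the blow-up set
  set T : Finset ℕ := S.biUnion (fun t => {t, t + 1}) with hT
  have hdisj : (S : Set ℕ).PairwiseDisjoint (fun t => ({t, t + 1} : Finset ℕ)) := by
    intro a ha b hb hab
    simp only [Finset.disjoint_left]
    intro x hx hx'
    simp only [Finset.mem_insert, Finset.mem_singleton] at hx hx'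
    rcases lt_or_gt_of_ne hab with h | h
    · have := hsep a ha b hb h; omega
    · have := hsep b hb a ha h; omega
  have hlow : (S.card : ℝ) * (1 / (9 * (n:ℝ)^2)) ≤ ∑ u ∈ T, D u := by
    rw [hT, Finset.sum_biUnion hdisj]
    calc (S.card : ℝ) * (1 / (9 * (n:ℝ)^2))
        = ∑ t ∈ S, 1 / (9 * (n:ℝ)^2) := by rw [Finset.sum_const, nsmul_eq_mul]
      _ ≤ ∑ t ∈ S, ∑ u ∈ ({t, t+1} : Finset ℕ), D u := by
          apply Finset.sum_le_sum
          intro t ht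
          have : ∑ u ∈ ({t, t+1} : Finset ℕ), D u = D t + D (t+1) := by
            rw [Finset.sum_insert (by simp), Finset.sum_singleton]
          rw [this]; exact hS t ht
  have hup : ∑ u ∈ T, D u ≤ (n:ℝ)^2 / 4 := by
    have hsub : T ⊆ Finset.range (T.sup id + 1) := by
      intro x hx
      simp only [Finset.mem_range]
      have : x ≤ T.sup id := Finset.le_sup (f := id) hx
      omega
    calc ∑ u ∈ T, D u ≤ ∑ u ∈ Finset.range (T.sup id + 1), D u :=
          Finset.sum_le_sum_of_subset_of_nonneg hsub (fun i _ _ => hD i)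
      _ ≤ (n:ℝ)^2 / 4 := hsumb _
  have key : (S.card : ℝ) * (1 / (9 * (n:ℝ)^2)) ≤ (n:ℝ)^2 / 4 := le_trans hlow hup
  have h9 : (0:ℝ) < 9 * (n:ℝ)^2 := by positivity
  rw [mul_one_div, div_le_div_iff₀ h9 (by norm_num : (0:ℝ) < 4)] at key
  nlinarith [key]
end

section
/- Let n ≥ 1 and p > 2 be real, and place n agents on the circle ℝ/pℤ in (weak) anticlockwise cyclic order. If each agent updates its position to the circular average (computed via the arc containing all its neighbours within distance 1, which has length ≤ 2 < p) of all agents within geodesic distance 1 of itself, then the updated positions are again in the same (weak) anticlockwise cyclic order; i.e., the Hegselmann-Krause update on the circle preserves the cyclic order of agents. -/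
/-- The lift of `y` modulo `p` lying in the window `[c - p/2, c + p/2)`,
i.e. the representative of `y` nearest to `c` (for `p > 0`). -/
noncomputable def nearestLift (p c y : ℝ) : ℝ :=
  c + (p * Int.fract ((y - c) / p + 1 / 2) - p / 2)

/-- The neighbourhood of agent `i`: all agents within geodesic distance `1`
of `x i` on the circle of perimeter `p`. -/
noncomputable def hkNbhd (p : ℝ) {n : ℕ} (x : Fin n → ℝ) (i : Fin n) :
    Finset (Fin n) :=
  Finset.univ.filter fun j => |nearestLift p (x i) (x j) - x i| ≤ 1

/-- The Hegselmann-Krause update on the circle of perimeter `p`: agent `i`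
moves to the average of its neighbours, computed via the arc of length `≤ 2`
centred at `x i` (each neighbour is represented by its lift nearest `x i`). -/
noncomputable def hkUpdate (p : ℝ) {n : ℕ} (x : Fin n → ℝ) (i : Fin n) : ℝ :=
  (∑ j ∈ hkNbhd p x i, nearestLift p (x i) (x j)) / (hkNbhd p x i).card

/-!
Lift the agents to `X = unroll p x : ℤ → ℝ`, `X (q * n + r) = x r + q * p`; the hypotheses make
`X` monotone, and `X (m + n) = X m + p`. As `p > 2`, the neighbours of agent `i` correspond,
through their nearest lifts, to the indices `m` with `|X m - X i| ≤ 1`, so the update of agent `i`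
is the average `U i` (`U = unrollUpdate p x`) of `X` over this window. On the line such window
averages are monotone in the centre: raising the centre only drops points lying below all the kept
ones and adds points lying above all of them. Hence `U` is monotone with `U (m + n) = U m + p`,
and `y i = U i` lifts the updated positions in cyclic order.
-/

open Finset

noncomputable def nearestLiftShift (p c y : ℝ) : ℤ := -⌊(y - c) / p + 1 / 2⌋

theorem nearestLift_eq_add_shift {p : ℝ} (hp : p ≠ 0) (c y : ℝ) :
    nearestLift p c y = y + nearestLiftShift p c y * p := by
  rw [nearestLift, nearestLiftShift, Int.fract]
  push_cast
  field_simp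
  ring

theorem nearestLiftShift_eq {p c y : ℝ} (hp : 0 < p) {k : ℤ}
    (h₁ : c - p / 2 ≤ y + k * p) (h₂ : y + k * p < c + p / 2) :
    nearestLiftShift p c y = k := by
  rw [nearestLiftShift, neg_eq_iff_eq_neg, Int.floor_eq_iff, Int.cast_neg]
  constructor
  · rw [← sub_le_iff_le_add, le_div_iff₀ hp]; linarith
  · rw [← lt_sub_iff_add_lt, div_lt_iff₀ hp]; linarith

namespace Finset

theorem card_mul_sum_le_card_mul_sum {ι : Type*} {f : ι → ℝ} {s t : Finset ι}
    (h : ∀ a ∈ s, ∀ b ∈ t, f a ≤ f b) :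
    #t * ∑ i ∈ s, f i ≤ #s * ∑ i ∈ t, f i :=
  calc (#t : ℝ) * ∑ i ∈ s, f i
    _ = ∑ a ∈ s, ∑ _b ∈ t, f a := by simp only [sum_const, nsmul_eq_mul, mul_sum]
    _ ≤ ∑ _a ∈ s, ∑ b ∈ t, f b := sum_le_sum fun a ha => sum_le_sum fun b hb => h a ha b hb
    _ = #s * ∑ i ∈ t, f i := by simp

theorem sum_div_card_le_sum_div_card {ι : Type*} [DecidableEq ι] {f : ι → ℝ}
    {s t : Finset ι} (hs : s.Nonempty) (ht : t.Nonempty)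
    (hleft : ∀ a ∈ s \ t, ∀ b ∈ t, f a ≤ f b) (hright : ∀ a ∈ s, ∀ b ∈ t \ s, f a ≤ f b) :
    (∑ i ∈ s, f i) / #s ≤ (∑ i ∈ t, f i) / #t := by
  -- Split `s` and `t` along `s ∩ t`; cross-multiplied, the claim is a sum of three such bounds.
  have h₁ := card_mul_sum_le_card_mul_sum fun a ha b hb =>
    hleft a ha b (inter_subset_right (s₁ := s) hb)
  have h₂ := card_mul_sum_le_card_mul_sum fun a ha b hb =>
    hleft a ha b (sdiff_subset (s := t) (t := s) hb)
  have h₃ := card_mul_sum_le_card_mul_sum fun a ha b hb =>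
    hright a (inter_subset_left (s₂ := t) ha) b hb
  rw [div_le_div_iff₀ (by simpa using hs) (by simpa using ht),
    ← sum_inter_add_sum_sdiff s t, ← sum_inter_add_sum_sdiff t s,
    ← card_inter_add_card_sdiff s t, ← card_inter_add_card_sdiff t s, inter_comm t s]
  push_cast
  linear_combination h₁ + h₂ + h₃

theorem sum_div_card_le_of_mem_iff_abs_sub_le {ι : Type*} [DecidableEq ι] {f : ι → ℝ}
    {s t : Finset ι} {r c d : ℝ} (hcd : c ≤ d) (hs : ∀ i, i ∈ s ↔ |f i - c| ≤ r)
    (ht : ∀ i, i ∈ t ↔ |f i - d| ≤ r) (hs₀ : s.Nonempty) (ht₀ : t.Nonempty) :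
    (∑ i ∈ s, f i) / #s ≤ (∑ i ∈ t, f i) / #t := by
  refine sum_div_card_le_sum_div_card hs₀ ht₀ (fun a ha b hb => ?_) (fun a ha b hb => ?_)
  · rw [mem_sdiff, hs, ht, abs_le, abs_le] at ha
    rw [ht, abs_le] at hb
    by_contra! h
    exact ha.2 ⟨by linarith, by linarith⟩
  · rw [mem_sdiff, hs, ht, abs_le, abs_le] at hb
    rw [hs, abs_le] at ha
    by_contra! h
    exact hb.2 ⟨by linarith, by linarith⟩

end Finset

variable {n : ℕ} [NeZero n]

noncomputable def unroll (p : ℝ) (x : Fin n → ℝ) (m : ℤ) : ℝ :=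
  x (Int.divModEquiv n m).2 + (Int.divModEquiv n m).1 * p

variable {p : ℝ} {x : Fin n → ℝ}

theorem unroll_divModEquiv_symm (q : ℤ) (r : Fin n) :
    unroll p x ((Int.divModEquiv n).symm (q, r)) = x r + q * p := by
  rw [unroll, Equiv.apply_symm_apply]

theorem unroll_natCast (i : Fin n) : unroll p x (i : ℕ) = x i := by
  simpa using unroll_divModEquiv_symm (p := p) (x := x) 0 i

theorem unroll_add_card (m : ℤ) : unroll p x (m + n) = unroll p x m + p := by
  obtain ⟨⟨q, r⟩, rfl⟩ := (Int.divModEquiv n).symm.surjective m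
  have hshift : (Int.divModEquiv n).symm (q, r) + n = (Int.divModEquiv n).symm (q + 1, r) := by
    simp only [Int.divModEquiv_symm_apply]; ring
  rw [hshift, unroll_divModEquiv_symm, unroll_divModEquiv_symm]
  push_cast
  ring

theorem monotone_unroll (hmono : Monotone x)
    (hspan : x ⟨n - 1, Nat.sub_one_lt (NeZero.ne n)⟩ ≤ x ⟨0, Nat.pos_of_neZero n⟩ + p) :
    Monotone (unroll p x) := by
  refine monotone_int_of_le_succ fun m => ?_
  obtain ⟨⟨q, r⟩, rfl⟩ := (Int.divModEquiv n).symm.surjective m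
  by_cases hr : r.val + 1 < n
  · have hsucc : (Int.divModEquiv n).symm (q, r) + 1 =
        (Int.divModEquiv n).symm (q, ⟨r + 1, hr⟩) := by
      simp only [Int.divModEquiv_symm_apply]; push_cast; ring
    rw [hsucc, unroll_divModEquiv_symm, unroll_divModEquiv_symm]
    have := hmono (show r ≤ ⟨r + 1, hr⟩ from Fin.le_def.2 (by simp))
    linarith
  · have hlast : r = ⟨n - 1, Nat.sub_one_lt (NeZero.ne n)⟩ := Fin.ext (by simp; omega)
    have hsucc : (Int.divModEquiv n).symm (q, r) + 1 =
        (Int.divModEquiv n).symm (q + 1, ⟨0, Nat.pos_of_neZero n⟩) := by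
      simp only [Int.divModEquiv_symm_apply, hlast]
      push_cast [Nat.one_le_iff_ne_zero.2 (NeZero.ne n)]
      ring
    rw [hsucc, unroll_divModEquiv_symm, unroll_divModEquiv_symm, hlast]
    push_cast
    linarith

variable (p x) in
noncomputable def unrollNbhd (t : ℤ) : Finset ℤ :=
  (Icc (t - n) (t + n)).filter fun m => |unroll p x m - unroll p x t| ≤ 1

variable (p x) in
noncomputable def unrollUpdate (t : ℤ) : ℝ :=
  (∑ m ∈ unrollNbhd p x t, unroll p x m) / #(unrollNbhd p x t)

theorem mem_unrollNbhd (hp : 1 < p) (hX : Monotone (unroll p x)) {m t : ℤ} :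
    m ∈ unrollNbhd p x t ↔ |unroll p x m - unroll p x t| ≤ 1 := by
  rw [unrollNbhd, mem_filter, mem_Icc, and_iff_right_iff_imp, abs_le]
  intro hm
  constructor
  · by_contra! h
    have := hX (show m ≤ t - n by omega)
    have hshift := unroll_add_card (p := p) (x := x) (t - n)
    rw [sub_add_cancel] at hshift
    linarith
  · by_contra! h
    have := hX (show t + n ≤ m by omega)
    rw [unroll_add_card] at this
    linarith

theorem unrollNbhd_nonempty (hp : 1 < p) (hX : Monotone (unroll p x)) (t : ℤ) :
    (unrollNbhd p x t).Nonempty :=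
  ⟨t, (mem_unrollNbhd hp hX).2 (by simp)⟩

theorem monotone_unrollUpdate (hp : 1 < p) (hX : Monotone (unroll p x)) :
    Monotone (unrollUpdate p x) := fun _ _ hst =>
  sum_div_card_le_of_mem_iff_abs_sub_le (hX hst) (fun _ => mem_unrollNbhd hp hX)
    (fun _ => mem_unrollNbhd hp hX) (unrollNbhd_nonempty hp hX _) (unrollNbhd_nonempty hp hX _)

theorem unrollNbhd_add_card (hp : 1 < p) (hX : Monotone (unroll p x)) (t : ℤ) :
    unrollNbhd p x (t + n) = (unrollNbhd p x t).map (addRightEmbedding (n : ℤ)) := by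
  ext m
  simp only [mem_map, addRightEmbedding_apply, mem_unrollNbhd hp hX, unroll_add_card]
  constructor
  · intro hm
    refine ⟨m - n, ?_, sub_add_cancel m n⟩
    rwa [← add_sub_add_right_eq_sub _ _ p, ← unroll_add_card, sub_add_cancel]
  · rintro ⟨a, ha, rfl⟩
    rwa [unroll_add_card, add_sub_add_right_eq_sub]

theorem unrollUpdate_add_card (hp : 1 < p) (hX : Monotone (unroll p x)) (t : ℤ) :
    unrollUpdate p x (t + n) = unrollUpdate p x t + p := by
  have hcard : (#(unrollNbhd p x t) : ℝ) ≠ 0 := by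
    simpa using (unrollNbhd_nonempty hp hX t).ne_empty
  rw [unrollUpdate, unrollUpdate, unrollNbhd_add_card hp hX, sum_map, card_map]
  simp only [addRightEmbedding_apply, unroll_add_card, sum_add_distrib, sum_const, nsmul_eq_mul]
  rw [add_div, mul_div_cancel_left₀ _ hcard]

variable (p x) in
@[simps]
noncomputable def nearestLiftEmbedding (c : ℝ) : Fin n ↪ ℤ where
  toFun j := (Int.divModEquiv n).symm (nearestLiftShift p c (x j), j)
  inj' _ _ h := congrArg Prod.snd ((Int.divModEquiv n).symm.injective h)

theorem unroll_nearestLiftEmbedding (hp : p ≠ 0) (c : ℝ) (j : Fin n) :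
    unroll p x (nearestLiftEmbedding p x c j) = nearestLift p c (x j) := by
  rw [nearestLiftEmbedding_apply, unroll_divModEquiv_symm, nearestLift_eq_add_shift hp]

theorem unrollNbhd_eq_map (hp : 2 < p) (hX : Monotone (unroll p x)) (i : Fin n) :
    unrollNbhd p x (i : ℕ) = (hkNbhd p x i).map (nearestLiftEmbedding p x (x i)) := by
  ext m
  obtain ⟨⟨q, r⟩, rfl⟩ := (Int.divModEquiv n).symm.surjective m
  simp only [mem_unrollNbhd (by linarith) hX, mem_map, hkNbhd, mem_filter, mem_univ, true_and,
    unroll_divModEquiv_symm, unroll_natCast]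
  constructor
  · intro hm
    have hshift : nearestLiftShift p (x i) (x r) = q := by
      rw [abs_le] at hm
      exact nearestLiftShift_eq (by linarith) (by linarith) (by linarith)
    refine ⟨r, ?_, ?_⟩
    · rwa [nearestLift_eq_add_shift (by linarith), hshift]
    · rw [nearestLiftEmbedding_apply, hshift]
  · rintro ⟨j, hj, he⟩
    obtain ⟨rfl, rfl⟩ := Prod.ext_iff.1 ((Int.divModEquiv n).symm.injective he)
    rwa [nearestLift_eq_add_shift (by linarith)] at hj

theorem hkUpdate_eq_unrollUpdate (hp : 2 < p) (hX : Monotone (unroll p x)) (i : Fin n) :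
    hkUpdate p x i = unrollUpdate p x (i : ℕ) := by
  rw [hkUpdate, unrollUpdate, unrollNbhd_eq_map hp hX, sum_map, card_map]
  simp only [unroll_nearestLiftEmbedding (show p ≠ 0 by linarith)]

/-- The HK update on a circle of perimeter `p > 2` preserves the (weak)
anticlockwise cyclic order of the agents. -/
theorem stmt_16 (n : ℕ) (hn : 1 ≤ n) (p : ℝ) (hp : 2 < p)
    (x : Fin n → ℝ) (hmono : Monotone x)
    (hspan : x ⟨n - 1, by omega⟩ < x ⟨0, by omega⟩ + p) :
    ∃ y : Fin n → ℝ,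
      (∀ i, (y i : AddCircle p) = ((hkUpdate p x i : ℝ) : AddCircle p)) ∧
      Monotone y ∧
      y ⟨n - 1, by omega⟩ ≤ y ⟨0, by omega⟩ + p := by
  have : NeZero n := ⟨by omega⟩
  have hX : Monotone (unroll p x) := monotone_unroll hmono hspan.le
  have hU := monotone_unrollUpdate (by linarith) hX
  refine ⟨fun i => unrollUpdate p x (i : ℕ), fun i => by rw [hkUpdate_eq_unrollUpdate hp hX],
    fun i j hij => hU (by exact_mod_cast hij), ?_⟩
  calc unrollUpdate p x ((n - 1 : ℕ) : ℤ) ≤ unrollUpdate p x ((0 : ℕ) + n) := hU (by omega)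
    _ = unrollUpdate p x (0 : ℕ) + p := unrollUpdate_add_card (by linarith) hX _
end
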